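/- Let D_F be a conservative gradient for a locally Lipschitz function F : ℝᵖ → ℝ bounded below, and r > 0. Then E(w,y) = F(w) + (r/2)‖y‖² is a Lyapunov function for the differential inclusion ẇ = -ry, ẏ ∈ D_F(w) - y with respect to the set Λ = {w : 0 ∈ D_F(w)} × {0}: for every solution (w,y) starting outside Λ and every t > 0, E(w(t),y(t)) < E(w(0),y(0)); and for solutions starting in Λ, E(w(t),y(t)) ≤ E(w(0),y(0)) for all t ≥ 0. -/

import Mathlib

/-!
By the chain rule, along a solution the energy `E(t) = F(w t) + (r/2)‖y t‖²` has derivative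
`⟪v, -r y⟫ + r ⟪y, v - y⟫ = -r ‖y‖²` at almost every `t`. On a bounded time interval `y` is
bounded, hence `w` is Lipschitz, hence `D_F ∘ w` is bounded and `y` is Lipschitz too; so `E` is
absolutely continuous and `E t = E 0 - r ∫₀ᵗ ‖y‖²`. The integral vanishes only if `y ≡ 0` on
`[0, t]`, and then `0 = ẏ 0 = v - y 0 = v` for some `v ∈ D_F (w 0)`, i.e. the solution starts in `Λ`.
-/

open MeasureTheory Set Filter Topology

section Curves

variable {E : Type*} [NormedAddCommGroup E] [NormedSpace ℝ E]

/-- Prolonging `w` affinely to the left of `a` keeps it differentiable everywhere. -/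
lemma exists_hasDerivAt_eventuallyEq_of_hasDerivAt_Ici {w w' : ℝ → E} {a : ℝ}
    (hw : ∀ t ≥ a, HasDerivAt w (w' t) t) :
    ∃ γ γ' : ℝ → E, (∀ t, HasDerivAt γ (γ' t) t) ∧ ∀ t > a, γ =ᶠ[𝓝 t] w ∧ γ' t = w' t := by
  set ℓ : ℝ → E := fun t => w a + (t - a) • w' a
  have hℓ (t : ℝ) : HasDerivAt ℓ (w' a) t :=
    (((hasDerivAt_id t).sub_const a).smul_const (w' a)).const_add (w a) |>.congr_deriv (one_smul _ _)
  have hγ_right (t : ℝ) (ht : a < t) : (Ici a).piecewise w ℓ =ᶠ[𝓝 t] w := by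
    filter_upwards [Ici_mem_nhds ht] with s hs using piecewise_eq_of_mem _ _ _ hs
  refine ⟨(Ici a).piecewise w ℓ, (Ici a).piecewise w' fun _ => w' a, fun t => ?_,
    fun t ht => ⟨hγ_right t ht, piecewise_eq_of_mem _ _ _ (mem_Ici.2 ht.le)⟩⟩
  rcases lt_trichotomy t a with ht | rfl | ht
  · have : (Ici a).piecewise w ℓ =ᶠ[𝓝 t] ℓ := by
      filter_upwards [Iio_mem_nhds ht] with s hs using piecewise_eq_of_notMem _ _ _ (notMem_Ici.2 hs)
    rw [piecewise_eq_of_notMem _ _ _ (notMem_Ici.2 ht)]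
    exact (hℓ t).congr_of_eventuallyEq this
  · rw [piecewise_eq_of_mem _ _ _ (mem_Ici.2 le_rfl), ← hasDerivWithinAt_univ, ← Iic_union_Ici]
    refine HasDerivWithinAt.union ?_ ?_
    · refine (hℓ t).hasDerivWithinAt.congr (fun s hs => ?_) ?_
      · rcases (mem_Iic.1 hs).lt_or_eq with hs | rfl
        · exact piecewise_eq_of_notMem _ _ _ (notMem_Ici.2 hs)
        · simp [ℓ]
      · simp [ℓ]
    · exact (hw t le_rfl).hasDerivWithinAt.congr (fun s hs => piecewise_eq_of_mem _ _ _ hs)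
        (piecewise_eq_of_mem _ _ _ (mem_Ici.2 le_rfl))
  · rw [piecewise_eq_of_mem _ _ _ (mem_Ici.2 ht.le)]
    exact (hw t ht.le).congr_of_eventuallyEq (hγ_right t ht)

lemma lipschitzOnWith_Icc_of_hasDerivAt_norm_le {f f' : ℝ → E} {a b C : ℝ}
    (hf : ∀ t ∈ Icc a b, HasDerivAt f (f' t) t) (hC : ∀ t ∈ Icc a b, ‖f' t‖ ≤ C) :
    LipschitzOnWith C.toNNReal f (Icc a b) :=
  (convex_Icc a b).lipschitzOnWith_of_nnnorm_hasDerivWithin_le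
    (fun t ht => (hf t ht).hasDerivWithinAt)
    (fun t ht => by rw [← NNReal.coe_le_coe, coe_nnnorm]; exact (hC t ht).trans C.le_coe_toNNReal)

end Curves

section HeavyBall

variable {E : Type*} [NormedAddCommGroup E] [InnerProductSpace ℝ E]

def HasChainRuleAlongCurves (F : E → ℝ) (D : E → Set E) : Prop :=
  ∀ γ γ' : ℝ → E, (∀ t, HasDerivAt γ (γ' t) t) →
    ∀ᵐ t ∂(volume : Measure ℝ), ∀ v ∈ D (γ t),
      HasDerivAt (fun s => F (γ s)) ((inner ℝ v (γ' t) : ℝ)) t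

lemma HasChainRuleAlongCurves.ae_hasDerivAt_of_Ici {F : E → ℝ} {D : E → Set E}
    (hF : HasChainRuleAlongCurves F D) {w w' : ℝ → E} {a : ℝ}
    (hw : ∀ t ≥ a, HasDerivAt w (w' t) t) :
    ∀ᵐ t, a < t → ∀ v ∈ D (w t), HasDerivAt (fun s => F (w s)) (inner ℝ v (w' t)) t := by
  obtain ⟨γ, γ', hγ, hγw⟩ := exists_hasDerivAt_eventuallyEq_of_hasDerivAt_Ici hw
  filter_upwards [hF γ γ' hγ] with t hFγ ht v hv
  obtain ⟨hγw_eq, hγ'⟩ := hγw t ht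
  rw [← hγw_eq.eq_of_nhds] at hv
  rw [← hγ']
  exact (hFγ v hv).congr_of_eventuallyEq (hγw_eq.fun_comp F).symm

def IsHeavyBallSolution (D : E → Set E) (r : ℝ) (w y w' y' : ℝ → E) : Prop :=
  ∀ t ∈ Ici (0 : ℝ), HasDerivAt w (w' t) t ∧ HasDerivAt y (y' t) t ∧
    w' t = -(r • y t) ∧ ∃ v ∈ D (w t), y' t = v - y t

noncomputable def heavyBallEnergy (F : E → ℝ) (r : ℝ) (w y : ℝ → E) (t : ℝ) : ℝ :=
  F (w t) + (r / 2) * ‖y t‖ ^ 2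

namespace IsHeavyBallSolution

variable {F : E → ℝ} {D : E → Set E} {r : ℝ} {w y w' y' : ℝ → E}

lemma hasDerivAt_energy (hs : IsHeavyBallSolution D r w y w' y') {t : ℝ} (ht : 0 ≤ t)
    (hF : ∀ v ∈ D (w t), HasDerivAt (fun s => F (w s)) (inner ℝ v (w' t)) t) :
    HasDerivAt (heavyBallEnergy F r w y) (-(r * ‖y t‖ ^ 2)) t := by
  obtain ⟨-, hy, hw', v, hv, hy'⟩ := hs t ht
  refine ((hF v hv).add (hy.norm_sq.const_mul (r / 2))).congr_deriv ?_
  rw [hw', hy', inner_neg_right, real_inner_smul_right, inner_sub_right, real_inner_self_eq_norm_sq,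
    real_inner_comm]
  ring

lemma ae_hasDerivAt_energy (hs : IsHeavyBallSolution D r w y w' y')
    (hchain : HasChainRuleAlongCurves F D) :
    ∀ᵐ t, 0 < t → HasDerivAt (heavyBallEnergy F r w y) (-(r * ‖y t‖ ^ 2)) t := by
  filter_upwards [hchain.ae_hasDerivAt_of_Ici fun t ht => (hs t ht).1] with t hFt ht
  exact hs.hasDerivAt_energy ht.le (hFt ht)

lemma continuousOn_velocity (hs : IsHeavyBallSolution D r w y w' y') (T : ℝ) :
    ContinuousOn y (Icc 0 T) :=
  fun t ht => (hs t ht.1).2.1.continuousAt.continuousWithinAt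

lemma lipschitzOnWith_position (hs : IsHeavyBallSolution D r w y w' y') {T C : ℝ}
    (hC : ∀ t ∈ Icc 0 T, ‖y t‖ ≤ C) : LipschitzOnWith (|r| * C).toNNReal w (Icc 0 T) :=
  lipschitzOnWith_Icc_of_hasDerivAt_norm_le (fun t ht => (hs t ht.1).1) fun t ht => by
    rw [(hs t ht.1).2.2.1, norm_neg, norm_smul, Real.norm_eq_abs]
    exact mul_le_mul_of_nonneg_left (hC t ht) (abs_nonneg r)

lemma lipschitzOnWith_velocity (hs : IsHeavyBallSolution D r w y w' y') {T C M : ℝ}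
    (hC : ∀ t ∈ Icc 0 T, ‖y t‖ ≤ C) (hM : ∀ t ∈ Icc 0 T, ∀ v ∈ D (w t), ‖v‖ ≤ M) :
    LipschitzOnWith (M + C).toNNReal y (Icc 0 T) :=
  lipschitzOnWith_Icc_of_hasDerivAt_norm_le (fun t ht => (hs t ht.1).2.1) fun t ht => by
    obtain ⟨v, hv, hy'⟩ := (hs t ht.1).2.2.2
    rw [hy']
    exact (norm_sub_le v (y t)).trans (add_le_add (hM t ht v hv) (hC t ht))

lemma absolutelyContinuousOnInterval_energy (hs : IsHeavyBallSolution D r w y w' y')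
    (hF : LocallyLipschitz F)
    (hD : ∀ K : Set E, IsCompact K → ∃ M, ∀ x ∈ K, ∀ v ∈ D x, ‖v‖ ≤ M) {T : ℝ} (hT : 0 ≤ T) :
    AbsolutelyContinuousOnInterval (heavyBallEnergy F r w y) 0 T := by
  obtain ⟨C, hC⟩ := isCompact_Icc.exists_bound_of_continuousOn (hs.continuousOn_velocity T)
  have hwL := hs.lipschitzOnWith_position hC
  have hK : IsCompact (w '' Icc 0 T) := isCompact_Icc.image_of_continuousOn hwL.continuousOn
  obtain ⟨KF, hKF⟩ := hF.locallyLipschitzOn.exists_lipschitzOnWith_of_compact hK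
  obtain ⟨M, hM⟩ := hD _ hK
  have hyL := hs.lipschitzOnWith_velocity hC fun t ht => hM _ (mem_image_of_mem w ht)
  have hFw := hKF.comp hwL (mapsTo_image w _)
  have hy := lipschitzWith_one_norm.comp_lipschitzOnWith hyL
  rw [← uIcc_of_le hT] at hFw hy
  replace hFw := hFw.absolutelyContinuousOnInterval
  replace hy := hy.absolutelyContinuousOnInterval
  unfold heavyBallEnergy
  simpa only [Function.comp_apply, sq] using hFw.fun_add ((hy.fun_mul hy).const_mul (r / 2))

lemma energy_eq_sub_integral (hs : IsHeavyBallSolution D r w y w' y') (hF : LocallyLipschitz F)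
    (hD : ∀ K : Set E, IsCompact K → ∃ M, ∀ x ∈ K, ∀ v ∈ D x, ‖v‖ ≤ M)
    (hchain : HasChainRuleAlongCurves F D) {t : ℝ} (ht : 0 ≤ t) :
    heavyBallEnergy F r w y t = heavyBallEnergy F r w y 0 - r * ∫ s in 0..t, ‖y s‖ ^ 2 := by
  have hFTC := (hs.absolutelyContinuousOnInterval_energy hF hD ht).integral_deriv_eq_sub
  have hderiv : ∫ s in 0..t, deriv (heavyBallEnergy F r w y) s = ∫ s in 0..t, -(r * ‖y s‖ ^ 2) := by
    refine intervalIntegral.integral_congr_ae ?_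
    filter_upwards [hs.ae_hasDerivAt_energy hchain] with s hEs hst
    exact (hEs (uIoc_of_le ht ▸ hst).1).deriv
  rw [hderiv, intervalIntegral.integral_neg, intervalIntegral.integral_const_mul] at hFTC
  linarith

lemma exists_velocity_ne_zero (hs : IsHeavyBallSolution D r w y w' y')
    (hΛ : ¬(0 ∈ D (w 0) ∧ y 0 = 0)) {t : ℝ} (ht : 0 < t) : ∃ s ∈ Icc 0 t, y s ≠ 0 := by
  by_contra! hy_zero
  have h0 : (0 : ℝ) ∈ Icc 0 t := left_mem_Icc.2 ht.le
  obtain ⟨-, hy', -, v, hv, hy'v⟩ := hs 0 h0.1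
  have hy'0 : y' 0 = 0 :=
    (uniqueDiffOn_Icc ht 0 h0).eq_deriv _ hy'.hasDerivWithinAt
      ((hasDerivWithinAt_const 0 _ 0).congr hy_zero (hy_zero 0 h0))
  rw [hy'0, hy_zero 0 h0, sub_zero] at hy'v
  exact hΛ ⟨hy'v ▸ hv, hy_zero 0 h0⟩

lemma integral_norm_sq_velocity_pos (hs : IsHeavyBallSolution D r w y w' y')
    (hΛ : ¬(0 ∈ D (w 0) ∧ y 0 = 0)) {t : ℝ} (ht : 0 < t) : 0 < ∫ s in 0..t, ‖y s‖ ^ 2 := by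
  obtain ⟨s, hst, hys⟩ := hs.exists_velocity_ne_zero hΛ ht
  exact intervalIntegral.integral_pos ht ((hs.continuousOn_velocity t).norm.pow 2)
    (fun _ _ => by positivity) ⟨s, hst, by positivity⟩

end IsHeavyBallSolution

end HeavyBall

theorem energy_is_lyapunov_general {p : ℕ}
    (F : EuclideanSpace ℝ (Fin p) → ℝ)
    (D_F : EuclideanSpace ℝ (Fin p) → Set (EuclideanSpace ℝ (Fin p)))
    (hlip : LocallyLipschitz F)
    (r : ℝ) (hr : 0 < r)
    -- conservative gradient: closed graph, nonempty convex values, locally bounded,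
    -- and the chain rule along (differentiable) curves
    (hlb : ∀ K : Set (EuclideanSpace ℝ (Fin p)), IsCompact K →
      ∃ M, ∀ x ∈ K, ∀ v ∈ D_F x, ‖v‖ ≤ M)
    (hchain : ∀ γ γ' : ℝ → EuclideanSpace ℝ (Fin p), (∀ t, HasDerivAt γ (γ' t) t) →
      ∀ᵐ t ∂(volume : Measure ℝ), ∀ v ∈ D_F (γ t),
        HasDerivAt (fun s => F (γ s)) ((inner ℝ v (γ' t) : ℝ)) t) :
    ∀ w y w' y' : ℝ → EuclideanSpace ℝ (Fin p),
      (∀ t ∈ Set.Ici (0:ℝ), HasDerivAt w (w' t) t ∧ HasDerivAt y (y' t) t ∧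
        w' t = -(r • y t) ∧ ∃ v ∈ D_F (w t), y' t = v - y t) →
      ((¬ (0 ∈ D_F (w 0) ∧ y 0 = 0)) →
        ∀ t > (0:ℝ), F (w t) + (r / 2) * ‖y t‖ ^ 2 < F (w 0) + (r / 2) * ‖y 0‖ ^ 2) ∧
      ((0 ∈ D_F (w 0) ∧ y 0 = 0) →
        ∀ t ≥ (0:ℝ), F (w t) + (r / 2) * ‖y t‖ ^ 2 ≤ F (w 0) + (r / 2) * ‖y 0‖ ^ 2) := by
  intro w y w' y' (hsol : IsHeavyBallSolution D_F r w y w' y')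
  have henergy (t : ℝ) (ht : 0 ≤ t) := hsol.energy_eq_sub_integral hlip hlb hchain ht
  refine ⟨fun hΛ t ht => ?_, fun _ t ht => ?_⟩
  · exact (henergy t ht.le).trans_lt
      (sub_lt_self _ (mul_pos hr (hsol.integral_norm_sq_velocity_pos hΛ ht)))
  · exact (henergy t ht).trans_le (sub_le_self _
      (mul_nonneg hr.le (intervalIntegral.integral_nonneg ht fun _ _ => by positivity)))

/-- The total energy `E(w,y) = F(w) + (r/2)‖y‖²` is a Lyapunov function for the
heavy ball differential inclusion `ẇ = -ry`, `ẏ ∈ D_F(w) - y` with respect to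
`Λ = {w : 0 ∈ D_F(w)} × {0}`, where `D_F` is a conservative gradient for the
locally Lipschitz function `F` bounded below. -/
theorem energy_is_lyapunov {p : ℕ}
    (F : EuclideanSpace ℝ (Fin p) → ℝ)
    (D_F : EuclideanSpace ℝ (Fin p) → Set (EuclideanSpace ℝ (Fin p)))
    (hlip : LocallyLipschitz F)
    (Fstar : ℝ) (hFstar : ∀ x, Fstar ≤ F x)
    (r : ℝ) (hr : 0 < r)
    -- conservative gradient: closed graph, nonempty convex values, locally bounded,
    -- and the chain rule along (differentiable) curves
    (hclosed : IsClosed {q : EuclideanSpace ℝ (Fin p) × EuclideanSpace ℝ (Fin p) | q.2 ∈ D_F q.1})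
    (hne : ∀ x, (D_F x).Nonempty)
    (hconv : ∀ x, Convex ℝ (D_F x))
    (hlb : ∀ K : Set (EuclideanSpace ℝ (Fin p)), IsCompact K →
      ∃ M, ∀ x ∈ K, ∀ v ∈ D_F x, ‖v‖ ≤ M)
    (hchain : ∀ γ γ' : ℝ → EuclideanSpace ℝ (Fin p), (∀ t, HasDerivAt γ (γ' t) t) →
      ∀ᵐ t ∂(volume : Measure ℝ), ∀ v ∈ D_F (γ t),
        HasDerivAt (fun s => F (γ s)) ((inner ℝ v (γ' t) : ℝ)) t) :
    ∀ w y w' y' : ℝ → EuclideanSpace ℝ (Fin p),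
      (∀ t ∈ Set.Ici (0:ℝ), HasDerivAt w (w' t) t ∧ HasDerivAt y (y' t) t ∧
        w' t = -(r • y t) ∧ ∃ v ∈ D_F (w t), y' t = v - y t) →
      ((¬ (0 ∈ D_F (w 0) ∧ y 0 = 0)) →
        ∀ t > (0:ℝ), F (w t) + (r / 2) * ‖y t‖ ^ 2 < F (w 0) + (r / 2) * ‖y 0‖ ^ 2) ∧
      ((0 ∈ D_F (w 0) ∧ y 0 = 0) →
        ∀ t ≥ (0:ℝ), F (w t) + (r / 2) * ‖y t‖ ^ 2 ≤ F (w 0) + (r / 2) * ‖y 0‖ ^ 2) :=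
  energy_is_lyapunov_general F D_F hlip r hr hlb hchain
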